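/- arXiv:1707.06877 — 2 statements merged into one kernel-verified Lean document; each statement's English description precedes it below -/
import Mathlib

section
/- Let q = 2^n with n ≥ 1. For every c ∈ F_q, ∏_{a ∈ T_0} (c + a) + ∏_{b ∈ T_1} (c + b) = c^{q/2} (the unique square root of c), where T_j = {a ∈ F_q^× : Tr_{F_q/F_2}(1/a) = j} for j = 0, 1. -/
open Finset

theorem stmt18 (F : Type*) [Field F] [Fintype F] [Algebra (ZMod 2) F] (n : ℕ) (hn : 1 ≤ n)
    (hq : Fintype.card F = 2 ^ n) (c : F) :
    (∏ᶠ a ∈ {a : F | a ≠ 0 ∧ Algebra.trace (ZMod 2) F a⁻¹ = 0}, (c + a)) +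
    (∏ᶠ b ∈ {b : F | b ≠ 0 ∧ Algebra.trace (ZMod 2) F b⁻¹ = 1}, (c + b)) =
    c ^ (Fintype.card F / 2) := by
  classical
  have two_cases : ∀ z : ZMod 2, z = 0 ∨ z = 1 := by decide
  have h11 : (1 : ZMod 2) + 1 = 0 := by decide
  have h10 : (1 : ZMod 2) ≠ 0 := by decide
  have h_tbl : ∀ a j : ZMod 2, a + j = 1 → a + 1 = j := by decide
  haveI : Fact (Nat.Prime 2) := ⟨Nat.prime_two⟩
  haveI hchar : CharP F 2 := charP_of_injective_algebraMap (algebraMap (ZMod 2) F).injective 2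
  set Tr := Algebra.trace (ZMod 2) F with hTrdef
  -- basic char-2 facts
  have add_self : ∀ x : F, x + x = 0 := fun x => CharTwo.add_self_eq_zero x
  have frob_inj : Function.Injective (fun x : F => x ^ 2) := by
    have h := (frobenius F 2).injective
    intro x y hxy; exact h (by simpa [frobenius_def] using hxy)
  -- trace is invariant under squaring
  have tr_sq : ∀ x : F, Tr (x ^ 2) = Tr x := by
    intro x
    have hfb : Function.Bijective (frobenius F 2) := by
      refine (Finite.injective_iff_bijective).mp ?_
      intro a b hab
      exact frob_inj (by simpa [frobenius_def] using hab)
    let f : F →ₐ[ZMod 2] F :=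
      { toRingHom := frobenius F 2
        commutes' := fun r => by
          show frobenius F 2 (algebraMap (ZMod 2) F r) = algebraMap (ZMod 2) F r
          rw [frobenius_def, ← map_pow, ZMod.pow_card] }
    let e : F ≃ₐ[ZMod 2] F := AlgEquiv.ofBijective f hfb
    have h := Algebra.trace_eq_of_algEquiv e x
    have he : e x = x ^ 2 := by
      show f x = x ^ 2
      show frobenius F 2 x = x ^ 2
      rw [frobenius_def]
    rw [he] at h
    exact h
  -- the trace is surjective
  haveI : FiniteDimensional (ZMod 2) F := Module.Finite.of_finite
  obtain ⟨w, hw⟩ : ∃ w : F, Tr w = 1 := Algebra.trace_surjective (ZMod 2) F 1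
  -- the finsets
  set S0 : Finset F := univ.filter (fun u => Tr u = 0) with hS0
  set S1 : Finset F := univ.filter (fun u => Tr u = 1) with hS1
  set S0' : Finset F := univ.filter (fun u => u ≠ 0 ∧ Tr u = 0) with hS0'
  set T0 : Finset F := univ.filter (fun a => a ≠ 0 ∧ Tr a⁻¹ = 0) with hT0
  set T1 : Finset F := univ.filter (fun a => a ≠ 0 ∧ Tr a⁻¹ = 1) with hT1
  have h0S1 : (0 : F) ∉ S1 := by simp [hS1, map_zero]
  have memS1_ne : ∀ u ∈ S1, u ≠ 0 := by
    intro u hu h0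
    exact h0S1 (h0 ▸ hu)
  -- products over squaring-stable sets of nonzero elements are 1
  have prod_eq_one : ∀ s : Finset F, (0 : F) ∉ s → (∀ v ∈ s, v ^ 2 ∈ s) →
      ∏ v ∈ s, v = 1 := by
    intro s h0 hsq
    have himg : s.image (fun v => v ^ 2) = s := by
      apply Finset.eq_of_subset_of_card_le
      · intro v hv
        obtain ⟨u, hu, rfl⟩ := Finset.mem_image.mp hv
        exact hsq u hu
      · rw [Finset.card_image_of_injective _ frob_inj]
    have hP : (∏ v ∈ s, v) ^ 2 = ∏ v ∈ s, v := by
      rw [← Finset.prod_pow]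
      conv_rhs => rw [← himg]
      rw [Finset.prod_image (fun a _ b _ h => frob_inj h)]
    have hPne : (∏ v ∈ s, v) ≠ 0 :=
      Finset.prod_ne_zero_iff.mpr (fun v hv hv0 => h0 (hv0 ▸ hv))
    have : (∏ v ∈ s, v) * (∏ v ∈ s, v) = 1 * (∏ v ∈ s, v) := by
      rw [one_mul, ← pow_two, hP]
    exact mul_right_cancel₀ hPne this
  have prodS0' : ∏ v ∈ S0', v = 1 := by
    apply prod_eq_one
    · simp [hS0']
    · intro v hv
      simp only [hS0', Finset.mem_filter, Finset.mem_univ, true_and] at hv ⊢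
      exact ⟨pow_ne_zero _ hv.1, by rw [tr_sq]; exact hv.2⟩
  have prodS1 : ∏ v ∈ S1, v = 1 := by
    apply prod_eq_one
    · exact h0S1
    · intro v hv
      simp only [hS1, Finset.mem_filter, Finset.mem_univ, true_and] at hv ⊢
      rw [tr_sq]; exact hv
  -- cardinalities
  have cardS0S1 : S0.card = S1.card := by
    apply Finset.card_nbij' (fun u => w + u) (fun v => w + v)
    · intro u hu
      simp only [hS0, hS1, Finset.mem_coe, Finset.mem_filter, Finset.mem_univ, true_and] at hu ⊢
      rw [map_add, hw, hu, add_zero]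
    · intro v hv
      simp only [hS0, hS1, Finset.mem_coe, Finset.mem_filter, Finset.mem_univ, true_and] at hv ⊢
      rw [map_add, hw, hv]
      exact h11
    · intro u _; dsimp only; rw [← add_assoc, add_self, zero_add]
    · intro v _; dsimp only; rw [← add_assoc, add_self, zero_add]
  have cardsum : S0.card + S1.card = Fintype.card F := by
    have : S1 = univ.filter (fun u => ¬ Tr u = 0) := by
      apply Finset.filter_congr
      intro u _
      rcases two_cases (Tr u) with h | h <;> simp [h]
    rw [this, Finset.card_filter_add_card_filter_not, Finset.card_univ]
  have cardS0 : S0.card = Fintype.card F / 2 := by omega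
  have cardS1 : S1.card = Fintype.card F / 2 := by omega
  -- rewrite the finprods as finset products
  have hset0 : {a : F | a ≠ 0 ∧ Tr a⁻¹ = 0} = (T0 : Set F) := by
    ext a; simp [hT0]
  have hset1 : {a : F | a ≠ 0 ∧ Tr a⁻¹ = 1} = (T1 : Set F) := by
    ext a; simp [hT1]
  rw [hset0, hset1, finprod_mem_coe_finset, finprod_mem_coe_finset]
  -- reindex by inversion
  have hinv0 : ∏ a ∈ T0, (c + a) = ∏ u ∈ S0', (c + u⁻¹) := by
    apply Finset.prod_nbij' (fun a => a⁻¹) (fun u => u⁻¹)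
    · intro a ha
      simp only [hT0, hS0', Finset.mem_filter, Finset.mem_univ, true_and] at ha ⊢
      exact ⟨inv_ne_zero ha.1, ha.2⟩
    · intro u hu
      simp only [hT0, hS0', Finset.mem_filter, Finset.mem_univ, true_and] at hu ⊢
      exact ⟨inv_ne_zero hu.1, by rw [inv_inv]; exact hu.2⟩
    · intro a _; rw [inv_inv]
    · intro u _; rw [inv_inv]
    · intro a ha
      simp only [hT0, Finset.mem_filter, Finset.mem_univ, true_and] at ha
      rw [inv_inv]
  have hinv1 : ∏ a ∈ T1, (c + a) = ∏ u ∈ S1, (c + u⁻¹) := by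
    apply Finset.prod_nbij' (fun a => a⁻¹) (fun u => u⁻¹)
    · intro a ha
      simp only [hT1, hS1, Finset.mem_filter, Finset.mem_univ, true_and] at ha ⊢
      exact ha.2
    · intro u hu
      have hune : u ≠ 0 := memS1_ne u hu
      simp only [hT1, hS1, Finset.mem_filter, Finset.mem_univ, true_and] at hu ⊢
      exact ⟨inv_ne_zero hune, by rw [inv_inv]; exact hu⟩
    · intro a _; rw [inv_inv]
    · intro u _; rw [inv_inv]
    · intro a _; rw [inv_inv]
  -- factor out u⁻¹
  have hfac : ∀ (s : Finset F), (∀ u ∈ s, u ≠ 0) → (∏ v ∈ s, v = 1) →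
      ∏ u ∈ s, (c + u⁻¹) = ∏ u ∈ s, (1 + c * u) := by
    intro s hne hprod
    have : ∀ u ∈ s, c + u⁻¹ = (1 + c * u) * u⁻¹ := by
      intro u hu
      rw [add_mul, one_mul, mul_assoc, mul_inv_cancel₀ (hne u hu), mul_one, add_comm]
    rw [Finset.prod_congr rfl this, Finset.prod_mul_distrib]
    have hinv : ∏ x ∈ s, x⁻¹ = 1 := by
      rw [Finset.prod_inv_distrib, hprod, inv_one]
    rw [hinv, mul_one]
  have hfac0 : ∏ u ∈ S0', (c + u⁻¹) = ∏ u ∈ S0', (1 + c * u) := by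
    apply hfac
    · intro u hu
      simp only [hS0', Finset.mem_filter, Finset.mem_univ, true_and] at hu
      exact hu.1
    · exact prodS0'
  have hfac1 : ∏ u ∈ S1, (c + u⁻¹) = ∏ u ∈ S1, (1 + c * u) := by
    exact hfac S1 memS1_ne prodS1
  -- extend S0' to S0
  have h0S0 : (0 : F) ∈ S0 := by simp [hS0, map_zero]
  have hS0'eq : S0' = S0.erase 0 := by
    ext u
    simp only [hS0', hS0, Finset.mem_filter, Finset.mem_univ, true_and, Finset.mem_erase]
  have hext : ∏ u ∈ S0', (1 + c * u) = ∏ u ∈ S0, (1 + c * u) := by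
    rw [hS0'eq]
    have := Finset.mul_prod_erase S0 (fun u => 1 + c * u) h0S0
    simpa using this
  rw [hinv0, hinv1, hfac0, hfac1, hext]
  -- now split on c = 0
  rcases eq_or_ne c 0 with rfl | hc
  · simp only [zero_mul, add_zero, Finset.prod_const_one]
    rw [add_self, eq_comm]
    apply zero_pow
    have : 2 ≤ Fintype.card F := by
      rw [hq]
      calc 2 = 2 ^ 1 := (pow_one 2).symm
      _ ≤ 2 ^ n := Nat.pow_le_pow_right (by norm_num) hn
    omega
  · -- factor out c
    set y := c⁻¹ with hy
    have hfc : ∀ u : F, 1 + c * u = c * (y + u) := by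
      intro u
      rw [mul_add, hy, mul_inv_cancel₀ hc]
    have hA : ∏ u ∈ S0, (1 + c * u) = c ^ (Fintype.card F / 2) * ∏ u ∈ S0, (y + u) := by
      rw [Finset.prod_congr rfl (fun u _ => hfc u), Finset.prod_mul_distrib,
        Finset.prod_const, cardS0]
    have hB : ∏ u ∈ S1, (1 + c * u) = c ^ (Fintype.card F / 2) * ∏ u ∈ S1, (y + u) := by
      rw [Finset.prod_congr rfl (fun u _ => hfc u), Finset.prod_mul_distrib,
        Finset.prod_const, cardS1]
    rw [hA, hB, ← mul_add]
    -- translation: ∏_{u∈Sj,  Tr(y)+j=1} (y+u) = ∏_{v∈S1} v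
    have htrans : ∀ (j : ZMod 2), Tr y + j = 1 →
        (∏ u ∈ univ.filter (fun u => Tr u = j), (y + u)) = ∏ v ∈ S1, v := by
      intro j hj
      apply Finset.prod_nbij' (fun u => y + u) (fun v => y + v)
      · intro u hu
        simp only [hS1, Finset.mem_filter, Finset.mem_univ, true_and] at hu ⊢
        rw [map_add, hu, hj]
      · intro v hv
        simp only [hS1, Finset.mem_filter, Finset.mem_univ, true_and] at hv ⊢
        rw [map_add, hv]
        exact h_tbl (Tr y) j hj
      · intro u _; rw [← add_assoc, add_self, zero_add]
      · intro v _; rw [← add_assoc, add_self, zero_add]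
      · intro u _; rfl
    rcases two_cases (Tr y) with hty | hty
    · -- A = 0, B = 1
      have hAz : ∏ u ∈ S0, (y + u) = 0 := by
        apply Finset.prod_eq_zero (i := y)
        · simp [hS0, hty]
        · exact add_self y
      have hB1 : ∏ u ∈ S1, (y + u) = 1 := by
        rw [show S1 = univ.filter (fun u => Tr u = 1) from hS1,
          htrans 1 (by rw [hty, zero_add]), prodS1]
      rw [hAz, hB1, zero_add, mul_one]
    · -- B = 0, A = 1
      have hBz : ∏ u ∈ S1, (y + u) = 0 := by
        apply Finset.prod_eq_zero (i := y)
        · simp [hS1, hty]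
        · exact add_self y
      have hA1 : ∏ u ∈ S0, (y + u) = 1 := by
        rw [show S0 = univ.filter (fun u => Tr u = 0) from hS0,
          htrans 0 (by rw [hty, add_zero]), prodS1]
      rw [hBz, hA1, add_zero, mul_one]
end

section
/- Let q = p^n be an odd prime power. Then in F_p[x], E_{(q−3)/2}(x) + E_{(q−1)/2}(x) = (x − 2)^{(q−1)/2}. -/
open Polynomial
variable {R : Type*} [CommRing R]

lemma dickE_rec (k : ℕ) : dickson 2 (1:R) (k+2) = X * dickson 2 1 (k+1) - dickson 2 1 k := by
  rw [dickson_add_two]; simp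

lemma dickD_rec (k : ℕ) : dickson 1 (1:R) (k+2) = X * dickson 1 1 (k+1) - dickson 1 1 k := by
  rw [dickson_add_two]; simp

lemma quad (k : ℕ) :
    (dickson 2 (1:R) (k+1) + dickson 2 1 (k+2))^2
      - X * ((dickson 2 1 k + dickson 2 1 (k+1)) * (dickson 2 1 (k+1) + dickson 2 1 (k+2)))
      + (dickson 2 1 k + dickson 2 1 (k+1))^2 = X + 2 := by
  induction k with
  | zero =>
    have h2 : dickson 2 (1:R) 2 = X^2 - 1 := by
      rw [dickE_rec]; simp [dickson_zero, dickson_one]; ring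
    rw [h2, dickson_zero, dickson_one]
    ring
  | succ k ih =>
    have h3 := dickE_rec (R := R) (k+1)
    have h2 := dickE_rec (R := R) k
    rw [show k+1+1 = k+2 from rfl, show k+1+2 = k+3 from rfl, h3]
    linear_combination ih + ((1+X) * dickson 2 (1:R) (k+2) - dickson 2 1 k - 2 * dickson 2 1 (k+1)) * h2

lemma keyAB (k : ℕ) :
    (X - 2) * (dickson 2 (1:R) k + dickson 2 1 (k+1))^2 = dickson 1 1 (2*k+3) - 2 ∧
    (X - 2) * ((dickson 2 (1:R) k + dickson 2 1 (k+1)) * (dickson 2 1 (k+1) + dickson 2 1 (k+2)))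
      = dickson 1 1 (2*k+4) - X := by
  induction k with
  | zero =>
    have e2 : dickson 2 (1:R) 2 = X^2 - 1 := by
      rw [dickE_rec]; simp [dickson_zero, dickson_one]; ring
    have d2 : dickson 1 (1:R) 2 = X^2 - 2 := by
      rw [dickD_rec]; simp [dickson_zero, dickson_one]; ring
    have d3 : dickson 1 (1:R) 3 = X^3 - 3*X := by
      rw [show (3:ℕ) = 1+2 from rfl, dickD_rec, d2, dickson_one]; ring
    have d4 : dickson 1 (1:R) 4 = X^4 - 4*X^2 + 2 := by
      rw [show (4:ℕ) = 2+2 from rfl, dickD_rec, d3, d2]; ring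
    constructor
    · rw [dickson_zero, dickson_one]; norm_num [d3]; ring
    · rw [dickson_zero, dickson_one, e2]; norm_num [d4]; ring
  | succ k ih =>
    obtain ⟨hA, hB⟩ := ih
    have hQ := quad (R := R) k
    have hE := dickE_rec (R := R) (k+1)
    have hD1 : dickson 1 (1:R) (2*(k+1)+3) = X * dickson 1 1 (2*k+4) - dickson 1 1 (2*k+3) := by
      rw [show 2*(k+1)+3 = (2*k+3)+2 by ring]; rw [dickD_rec]
    have hD2 : dickson 1 (1:R) (2*(k+1)+4) = X * dickson 1 1 (2*(k+1)+3) - dickson 1 1 (2*k+4) := by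
      rw [show 2*(k+1)+4 = (2*k+4)+2 by ring, dickD_rec,
        show 2*k+4+1 = 2*(k+1)+3 by ring]
    have hA' : (X - 2) * (dickson 2 (1:R) (k+1) + dickson 2 1 (k+1+1))^2
        = dickson 1 1 (2*(k+1)+3) - 2 := by
      rw [hD1]
      linear_combination (X-2) * hQ + X * hB - hA
    refine ⟨hA', ?_⟩
    have hE3 : dickson 2 (1:R) (k+3) = X * dickson 2 1 (k+2) - dickson 2 1 (k+1) :=
      dickE_rec (k+1)
    have hE2 := dickE_rec (R := R) k
    have hA2 := hA'
    rw [show 2*(k+1)+3 = 2*k+5 by ring, show k+1+1 = k+2 from rfl] at hA2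
    rw [hD2, show k+1+1 = k+2 from rfl, show k+1+2 = k+3 from rfl,
      show 2*(k+1)+3 = 2*k+5 by ring]
    linear_combination X * hA2 - hB
      + (X-2) * (dickson 2 (1:R) (k+1) + dickson 2 1 (k+2)) * hE3
      + (X-2) * (dickson 2 (1:R) (k+1) + dickson 2 1 (k+2)) * hE2

lemma dickE_deg : ∀ n : ℕ, (dickson 2 (1:R) n).natDegree ≤ n ∧ (dickson 2 (1:R) n).coeff n = 1
  | 0 => by norm_num [dickson_zero]
  | 1 => by simp [dickson_one, natDegree_X_le]
  | (n+2) => by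
    have H0 : (dickson 2 (1:R) n).natDegree ≤ n ∧ (dickson 2 (1:R) n).coeff n = 1 :=
      dickE_deg n
    have H1 : (dickson 2 (1:R) (n+1)).natDegree ≤ n+1 ∧
        (dickson 2 (1:R) (n+1)).coeff (n+1) = 1 := dickE_deg (n+1)
    obtain ⟨h0, h0'⟩ := H0
    obtain ⟨h1, h1'⟩ := H1
    rw [dickE_rec]
    constructor
    · refine le_trans (natDegree_sub_le _ _) (max_le ?_ (h0.trans (by omega)))
      refine le_trans (natDegree_mul_le) (le_trans (add_le_add (natDegree_X_le (R := R)) h1) (by omega))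
    · rw [coeff_sub, coeff_X_mul, h1', coeff_eq_zero_of_natDegree_lt (by omega), sub_zero]

lemma dickD_pow (p : ℕ) [Fact p.Prime] (n : ℕ) :
    dickson 1 (1 : ZMod p) (p ^ n) = X ^ (p ^ n) := by
  induction n with
  | zero => simp [dickson_one]
  | succ n ih =>
    rw [pow_succ, dickson_one_one_mul, ih, dickson_one_one_zmod_p, pow_comp, X_comp,
      ← pow_mul, mul_comm]


theorem stmt19 (p : ℕ) [Fact p.Prime] (hp : p ≠ 2) (n : ℕ) (hn : 1 ≤ n) :
    dickson 2 (1 : ZMod p) ((p ^ n - 3) / 2) + dickson 2 (1 : ZMod p) ((p ^ n - 1) / 2) =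
      (X - 2) ^ ((p ^ n - 1) / 2) := by
  have hprime := (Fact.out : p.Prime)
  have hodd : Odd p := hprime.odd_of_ne_two hp
  have hp3 : 3 ≤ p := by
    rcases hprime.two_le.lt_or_eq with h | h
    · omega
    · omega
  have hq3 : 3 ≤ p ^ n := le_trans hp3 (Nat.le_self_pow (by omega) p)
  obtain ⟨t, ht⟩ := hodd.pow (n := n)
  set q := p ^ n with hqdef
  set k := (q - 3) / 2 with hk
  have hk1 : (q - 1) / 2 = k + 1 := by omega
  have h2k3 : 2 * k + 3 = q := by omega
  rw [hk1]
  have hA := (keyAB (R := ZMod p) k).1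
  rw [h2k3, hqdef, dickD_pow p n, ← hqdef] at hA
  have hchar : CharP ((ZMod p)[X]) p := by infer_instance
  have hfrob : (X - 2 : (ZMod p)[X]) ^ q = X ^ q - 2 := by
    rw [hqdef, sub_pow_char_pow]
    congr 1
    have hC2 : C (2 : ZMod p) = (2 : (ZMod p)[X]) := by
      have h2 : ((2:ℕ): ZMod p) = (2: ZMod p) := by norm_num
      rw [← h2, C_eq_natCast]; norm_num
    calc (2 : (ZMod p)[X]) ^ p ^ n = C ((2 : ZMod p) ^ p ^ n) := by
          rw [map_pow, hC2]
      _ = C (2 : ZMod p) := by rw [ZMod.pow_card_pow]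
      _ = 2 := hC2
  have hq2k : q = 2 * (k + 1) + 1 := by omega
  have hsq : (dickson 2 (1 : ZMod p) k + dickson 2 1 (k+1)) ^ 2
      = ((X - 2 : (ZMod p)[X]) ^ (k+1)) ^ 2 := by
    have hXne : (X - 2 : (ZMod p)[X]) ≠ 0 := by
      have hC2 : C (2 : ZMod p) = (2 : (ZMod p)[X]) := by
        have h2 : ((2:ℕ): ZMod p) = (2: ZMod p) := by norm_num
        rw [← h2, C_eq_natCast]; norm_num
      rw [← hC2]
      exact X_sub_C_ne_zero 2
    apply mul_left_cancel₀ hXne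
    rw [hA, ← hfrob, hq2k]
    ring
  have hfac : ((dickson 2 (1 : ZMod p) k + dickson 2 1 (k+1)) - (X - 2) ^ (k+1))
      * ((dickson 2 (1 : ZMod p) k + dickson 2 1 (k+1)) + (X - 2) ^ (k+1)) = 0 := by
    linear_combination hsq
  rcases mul_eq_zero.mp hfac with h | h
  · linear_combination h
  · exfalso
    have hc : ((dickson 2 (1 : ZMod p) k + dickson 2 1 (k+1))
        + (X - 2 : (ZMod p)[X]) ^ (k+1)).coeff (k+1) = 0 := by rw [h]; simp
    have hmon : ((X - 2 : (ZMod p)[X]) ^ (k+1)).coeff (k+1) = 1 := by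
      have hC2 : C (2 : ZMod p) = (2 : (ZMod p)[X]) := by
        have h2 : ((2:ℕ): ZMod p) = (2: ZMod p) := by norm_num
        rw [← h2, C_eq_natCast]; norm_num
      have hm : ((X - C 2 : (ZMod p)[X]) ^ (k+1)).Monic := (monic_X_sub_C 2).pow _
      have hd : ((X - C 2 : (ZMod p)[X]) ^ (k+1)).natDegree = k + 1 := by
        rw [natDegree_pow, natDegree_X_sub_C, mul_one]
      have hcn := hm.coeff_natDegree
      rw [hd, hC2] at hcn
      exact hcn
    rw [coeff_add, coeff_add, (dickE_deg (k+1) : _).2, hmon,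
      coeff_eq_zero_of_natDegree_lt (lt_of_le_of_lt (dickE_deg k : _).1 (by omega))] at hc
    have h2 : (2 : ZMod p) = 0 := by linear_combination hc
    have : ((2 : ℕ) : ZMod p) = 0 := by exact_mod_cast h2
    rw [ZMod.natCast_eq_zero_iff] at this
    exact hp ((Nat.prime_dvd_prime_iff_eq hprime Nat.prime_two).mp this)
end
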